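/- Let λ be a weak composition of n, w ∈ S_n with R(w) row-strict, and 2 ≤ k ≤ n. Then the set B_k(w) of matrices g_k defined by: (1) g_k e_{w(j)} = e_{w(j)} + x_{w(k)w(ℓ)} X_λ^m e_{w(k)} whenever (k,ℓ) ∈ inv_λ^k(w) and e_{w(j)} = X_λ^m e_{w(ℓ)} for some m ≥ 0 (with arbitrary scalars x_{w(k)w(ℓ)} ∈ ℂ), and (2) g_k e_{w(j)} = e_{w(j)} otherwise, is an abelian subgroup of the group of upper triangular unipotent matrices U, of dimension |inv_λ^k(w)|. The product of the elements with coordinate vectors x and y is the element with coordinate vector x + y. -/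

import Mathlib

open Matrix

attribute [local instance] Classical.propDecidable

noncomputable section

/-- Label of the box in row `i` (0-indexed from the top), column `j` (0-indexed) of the base
filling of the weak composition `lam`: columns filled left to right, each column bottom to top,
labels `1,…,n`. -/
def baseLabel (lam : List ℕ) (i j : ℕ) : ℕ :=
  (∑ i' ∈ Finset.range lam.length, min (lam.getD i' 0) j) +
    ((Finset.Ico i lam.length).filter (fun i' => j < lam.getD i' 0)).card

def IsBox (lam : List ℕ) (i j : ℕ) : Prop :=
  i < lam.length ∧ j < lam.getD i 0

/-- The nilpotent matrix `X_λ = Σ E_{ℓ r}` over pairs where the box labeled `r` is directly right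
of the box labeled `ℓ` in the base filling (labels are 1-indexed; matrix indices 0-indexed). -/
def Xlam (n : ℕ) (lam : List ℕ) : Matrix (Fin n) (Fin n) ℂ :=
  fun ℓ r => if (∃ i j, IsBox lam i (j+1) ∧ baseLabel lam i j = (ℓ : ℕ) + 1 ∧
      baseLabel lam i (j+1) = (r : ℕ) + 1) then 1 else 0

def IsFullFlag (n : ℕ) (V : ℕ → Submodule ℂ (Fin n → ℂ)) : Prop :=
  V 0 = ⊥ ∧ (∀ i, V i ≤ V (i+1)) ∧ ∀ i, i ≤ n → Module.finrank ℂ (V i) = i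

def InHess (n : ℕ) (X : Matrix (Fin n) (Fin n) ℂ) (h : ℕ → ℕ)
    (V : ℕ → Submodule ℂ (Fin n → ℂ)) : Prop :=
  ∀ i, i ≤ n → ∀ v ∈ V i, X.mulVec v ∈ V (h i)

/-- The flag `wE_•`, whose `k`-th space is spanned by `e_{w(1)},…,e_{w(k)}` (0-indexed). -/
def permFlag (n : ℕ) (w : Equiv.Perm (Fin n)) : ℕ → Submodule ℂ (Fin n → ℂ) :=
  fun k => Submodule.span ℂ {v | ∃ j : Fin n, (j : ℕ) < k ∧ v = Pi.single (w j) (1 : ℂ)}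

/-- The flag whose `k`-th space is spanned by the first `k` columns of `g`. -/
def matFlag (n : ℕ) (g : Matrix (Fin n) (Fin n) ℂ) : ℕ → Submodule ℂ (Fin n → ℂ) :=
  fun k => Submodule.span ℂ {c | ∃ j : Fin n, (j : ℕ) < k ∧ c = fun a => g a j}

def permMat (n : ℕ) (σ : Equiv.Perm (Fin n)) : Matrix (Fin n) (Fin n) ℂ :=
  fun a b => if σ b = a then 1 else 0

def invSet (n : ℕ) (w : Equiv.Perm (Fin n)) : Finset (Fin n × Fin n) :=
  Finset.univ.filter (fun p => p.2 < p.1 ∧ w p.1 < w p.2)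

def blen (n : ℕ) (w : Equiv.Perm (Fin n)) : ℕ := (invSet n w).card

/-- `v = s_i s_{i+1} ⋯ s_{n-1}` (0-indexed simple transpositions `swap j (j+1)`). -/
def vPerm (n : ℕ) (i : ℕ) : Equiv.Perm (Fin (n+1)) :=
  ((List.Ico i n).map (fun j : ℕ => Equiv.swap (Fin.ofNat (n+1) j) (Fin.ofNat (n+1) (j+1 : ℕ)))).prod

/-- `R(w)` is row-strict: the entry in the box labeled `m` of the base filling is `w⁻¹(m)`,
so entry `p` (0-indexed) occupies the box whose base label is `w(p)+1`. -/
def RowStrictT (n : ℕ) (lam : List ℕ) (w : Equiv.Perm (Fin n)) : Prop :=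
  ∀ i j, IsBox lam i (j+1) → ∀ p q : Fin n,
    (w p : ℕ) + 1 = baseLabel lam i j → (w q : ℕ) + 1 = baseLabel lam i (j+1) → p < q

def HStrictT (n : ℕ) (lam : List ℕ) (h : ℕ → ℕ) (w : Equiv.Perm (Fin n)) : Prop :=
  ∀ i j, IsBox lam i (j+1) → ∀ p q : Fin n,
    (w p : ℕ) + 1 = baseLabel lam i j → (w q : ℕ) + 1 = baseLabel lam i (j+1) →
      (p : ℕ) + 1 ≤ h ((q : ℕ) + 1)

/-- `(k,ℓ)` is a Hessenberg inversion of `R(w)` (entries 0-indexed: values are index+1). -/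
def HessInvT (n : ℕ) (lam : List ℕ) (h : ℕ → ℕ) (w : Equiv.Perm (Fin n)) (k ℓ : Fin n) : Prop :=
  ℓ < k ∧ ∃ ik jk il jl : ℕ, IsBox lam ik jk ∧ IsBox lam il jl ∧
    baseLabel lam ik jk = (w k : ℕ) + 1 ∧ baseLabel lam il jl = (w ℓ : ℕ) + 1 ∧
    (jk < jl ∨ (jk = jl ∧ il < ik)) ∧
    (∀ r : Fin n, IsBox lam il (jl + 1) → (w r : ℕ) + 1 = baseLabel lam il (jl + 1) →
      (k : ℕ) + 1 ≤ h ((r : ℕ) + 1))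

/-- Springer inversions: Hessenberg inversions for `h = (0,1,…,n-1)`, i.e. `h(i) = i - 1`. -/
def SpringerInvT (n : ℕ) (lam : List ℕ) (w : Equiv.Perm (Fin n)) (k ℓ : Fin n) : Prop :=
  HessInvT n lam (fun m => m - 1) w k ℓ

/-- The box labeled `b+1` is directly right of the box labeled `a+1` in the base filling. -/
def RightNbr (lam : List ℕ) (a b : ℕ) : Prop :=
  ∃ i j, IsBox lam i (j+1) ∧ baseLabel lam i j = a + 1 ∧ baseLabel lam i (j+1) = b + 1

/-- The box labeled `a+1` is at the end of its row in the base filling. -/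
def EndOfRow (lam : List ℕ) (a : ℕ) : Prop :=
  ∃ i j, IsBox lam i j ∧ ¬ IsBox lam i (j+1) ∧ baseLabel lam i j = a + 1

def IsUpperUnip (n : ℕ) (g : Matrix (Fin n) (Fin n) ℂ) : Prop :=
  (∀ i, g i i = 1) ∧ ∀ i j : Fin n, j < i → g i j = 0

/-- `U_i`: upper unipotent matrices whose off-diagonal entries are supported in row `i`. -/
def InUi (n : ℕ) (i : Fin n) (g : Matrix (Fin n) (Fin n) ℂ) : Prop :=
  IsUpperUnip n g ∧ ∀ a b : Fin n, a ≠ b → g a b ≠ 0 → a = i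

/-- `U_0`: upper unipotent matrices of `GL_n` embedded in `GL_{n+1}` (last column trivial). -/
def InU0 (n : ℕ) (g : Matrix (Fin (n+1)) (Fin (n+1)) ℂ) : Prop :=
  IsUpperUnip (n+1) g ∧ ∀ a : Fin (n+1), a ≠ Fin.last n → g a (Fin.last n) = 0

/-- The element of `B_k(w)` with coordinates `x`: it sends `e_{w(j)} = X_λ^m e_{w(ℓ)}` to
`e_{w(j)} + x ℓ • X_λ^m e_{w(k)}` for Springer inversions `(k,ℓ)`, fixing all other `e_{w(j)}`. -/
def BkMat (n : ℕ) (lam : List ℕ) (w : Equiv.Perm (Fin n)) (k : Fin n) (x : Fin n → ℂ) :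
    Matrix (Fin n) (Fin n) ℂ :=
  1 + ∑ ℓ : Fin n, if SpringerInvT n lam w k ℓ then
      x ℓ • (∑ m ∈ Finset.range n,
        (Xlam n lam) ^ m * Matrix.single (w k) (w ℓ) (1 : ℂ) * ((Xlam n lam)ᵀ) ^ m)
    else 0

/-- The product `g_n g_{n-1} ⋯ g_2` of elements `g_k ∈ B_k(w)` with coordinates `x k`. -/
def bigB (n : ℕ) (lam : List ℕ) (w : Equiv.Perm (Fin n)) (x : Fin n → Fin n → ℂ) :
    Matrix (Fin n) (Fin n) ℂ :=
  ((List.ofFn (fun k : Fin n => BkMat n lam w k (x k))).reverse).prod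

/- Abstract fillings `T : row → column → value` of the diagram of `lam`, values in `[1, n]`. -/

def RowStrictF (lam : List ℕ) (T : ℕ → ℕ → ℕ) : Prop :=
  ∀ i j, IsBox lam i (j+1) → T i j < T i (j+1)

def HStrictF (lam : List ℕ) (h : ℕ → ℕ) (T : ℕ → ℕ → ℕ) : Prop :=
  ∀ i j, IsBox lam i (j+1) → T i j ≤ h (T i (j+1))

def GoodFilling (lam : List ℕ) (T : ℕ → ℕ → ℕ) : Prop :=
  (∀ i j, IsBox lam i j → 1 ≤ T i j ∧ T i j ≤ lam.sum) ∧
  (∀ m, 1 ≤ m → m ≤ lam.sum → ∃ i j, IsBox lam i j ∧ T i j = m) ∧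
  (∀ i j i' j', IsBox lam i j → IsBox lam i' j' → T i j = T i' j' → i = i' ∧ j = j')

def HessInvF (lam : List ℕ) (h : ℕ → ℕ) (T : ℕ → ℕ → ℕ) (k ℓ : ℕ) : Prop :=
  ℓ < k ∧ ∃ ik jk il jl : ℕ, IsBox lam ik jk ∧ IsBox lam il jl ∧
    T ik jk = k ∧ T il jl = ℓ ∧
    (jk < jl ∨ (jk = jl ∧ il < ik)) ∧
    (IsBox lam il (jl + 1) → k ≤ h (T il (jl + 1)))

/-- `S` is obtained from `T` by sorting each column increasingly from top to bottom:
same column entries (as sets, entries being distinct), with columns of `S` increasing. -/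
def ColSortedOf (lam : List ℕ) (T S : ℕ → ℕ → ℕ) : Prop :=
  (∀ j m, (∃ i, IsBox lam i j ∧ T i j = m) ↔ (∃ i, IsBox lam i j ∧ S i j = m)) ∧
  (∀ i j, IsBox lam i j → IsBox lam (i+1) j → S i j < S (i+1) j)

def IsPartitionL (lam : List ℕ) : Prop :=
  ∀ i i', i ≤ i' → lam.getD i' 0 ≤ lam.getD i 0

def hessInvCount (lam : List ℕ) (h : ℕ → ℕ) (T : ℕ → ℕ → ℕ) : ℕ :=
  (((Finset.range (lam.sum + 1)) ×ˢ (Finset.range (lam.sum + 1))).filter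
    (fun p => HessInvF lam h T p.1 p.2)).card

def Hspace (n : ℕ) (h : ℕ → ℕ) : Submodule ℂ (Matrix (Fin n) (Fin n) ℂ) :=
  Submodule.span ℂ
    {A | ∃ i j : Fin n, (i : ℕ) + 1 ≤ h ((j : ℕ) + 1) ∧ A = Matrix.single i j (1 : ℂ)}

/-- Left-nested iterated bracket `[f (m), [f (m-1), [⋯ [f 1, f 0]]]]`. -/
def iterBr (n : ℕ) (f : ℕ → Matrix (Fin n) (Fin n) ℂ) : ℕ → Matrix (Fin n) (Fin n) ℂ
  | 0 => f 0
  | (m+1) => f (m+1) * iterBr n f m - iterBr n f m * f (m+1)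

/-!
Write `g_k(x) = 1 + ∑_ℓ x_ℓ N_ℓ` with `N_ℓ = ∑_m X_λ^m E_{w(k),w(ℓ)} (X_λᵀ)^m` for each Springer
inversion `(k,ℓ)`. `X_λ` shifts labels one box to the left along rows of the base filling, so a
nonzero entry `(a,b)` of `N_ℓ` comes from boxes `a` and `b` lying `m` boxes left of `w(k)` and
`w(ℓ)`. The box of `w(k)` is strictly left of, or below, that of `w(ℓ)`; moving both `m` steps
left preserves this, so `a < b` and `N_ℓ` is strictly upper triangular. A nonzero entry of
`N_ℓ N_ℓ'` would put `w(k)` and `w(ℓ)` in one row, with `k` left of `ℓ`, against row-strictness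
and `ℓ < k`. Hence all products `N_ℓ N_ℓ'` vanish, `g_k(x) g_k(y) = g_k(x + y)`, and `x_ℓ` is the
`(w(k), w(ℓ))` entry of `g_k(x)`.
-/

lemma List.sum_eq_sum_range_getD (l : List ℕ) :
    l.sum = ∑ i ∈ Finset.range l.length, l.getD i 0 := by
  induction l with
  | nil => simp
  | cons a l ih =>
    rw [List.sum_cons, List.length_cons, Finset.sum_range_succ', ih]
    simp [Nat.add_comm]

section BaseFilling

variable {lam : List ℕ} {i i' j j' m : ℕ}

/-- The base filling labels column `j` by `colStart lam j + 1, …, colStart lam (j + 1)`. -/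
def colStart (lam : List ℕ) (j : ℕ) : ℕ :=
  ∑ i ∈ Finset.range lam.length, min (lam.getD i 0) j

lemma baseLabel_eq_colStart_add (lam : List ℕ) (i j : ℕ) : baseLabel lam i j =
    colStart lam j + ((Finset.Ico i lam.length).filter (fun i' => j < lam.getD i' 0)).card :=
  rfl

lemma colStart_succ (lam : List ℕ) (j : ℕ) : colStart lam (j + 1) =
    colStart lam j + ((Finset.range lam.length).filter (fun i => j < lam.getD i 0)).card := by
  rw [colStart, colStart, Finset.card_filter, ← Finset.sum_add_distrib]
  refine Finset.sum_congr rfl fun i _ => ?_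
  split_ifs <;> omega

lemma colStart_mono (lam : List ℕ) : Monotone (colStart lam) :=
  fun _ _ h => Finset.sum_le_sum fun _ _ => min_le_min le_rfl h

lemma colStart_le_sum (lam : List ℕ) (j : ℕ) : colStart lam j ≤ lam.sum := by
  rw [List.sum_eq_sum_range_getD]
  exact Finset.sum_le_sum fun _ _ => min_le_left _ _

lemma IsBox.left (h : IsBox lam i (j + m)) : IsBox lam i j :=
  ⟨h.1, lt_of_le_of_lt (Nat.le_add_right j m) h.2⟩

lemma colStart_lt_baseLabel (h : IsBox lam i j) : colStart lam j < baseLabel lam i j := by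
  rw [baseLabel_eq_colStart_add, Nat.lt_add_right_iff_pos, Finset.card_pos]
  exact ⟨i, Finset.mem_filter.2 ⟨Finset.mem_Ico.2 ⟨le_rfl, h.1⟩, h.2⟩⟩

lemma baseLabel_le_colStart_succ (lam : List ℕ) (i j : ℕ) :
    baseLabel lam i j ≤ colStart lam (j + 1) := by
  rw [baseLabel_eq_colStart_add, colStart_succ]
  refine Nat.add_le_add_left (Finset.card_le_card (Finset.filter_subset_filter _ ?_)) _
  exact fun a ha => Finset.mem_range.2 (Finset.mem_Ico.1 ha).2

lemma baseLabel_le_sum (lam : List ℕ) (i j : ℕ) : baseLabel lam i j ≤ lam.sum :=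
  (baseLabel_le_colStart_succ lam i j).trans (colStart_le_sum lam _)

lemma baseLabel_lt_of_col_lt (h' : IsBox lam i' j') (hj : j < j') :
    baseLabel lam i j < baseLabel lam i' j' :=
  ((baseLabel_le_colStart_succ lam i j).trans (colStart_mono lam hj)).trans_lt
    (colStart_lt_baseLabel h')

lemma baseLabel_lt_of_row_lt (h : IsBox lam i j) (hi : i < i') :
    baseLabel lam i' j < baseLabel lam i j := by
  rw [baseLabel_eq_colStart_add, baseLabel_eq_colStart_add]
  refine Nat.add_lt_add_left (Finset.card_lt_card ?_) _
  refine (Finset.ssubset_iff_of_subset (Finset.filter_subset_filter _ ?_)).2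
    ⟨i, Finset.mem_filter.2 ⟨Finset.mem_Ico.2 ⟨le_rfl, h.1⟩, h.2⟩, ?_⟩
  · intro a ha
    simp only [Finset.mem_Ico] at ha ⊢
    omega
  · simp only [Finset.mem_filter, Finset.mem_Ico]
    omega

lemma baseLabel_lt_baseLabel (h' : IsBox lam i' j')
    (hlex : j < j' ∨ j = j' ∧ i' < i) : baseLabel lam i j < baseLabel lam i' j' := by
  rcases hlex with hj | ⟨rfl, hi⟩
  · exact baseLabel_lt_of_col_lt h' hj
  · exact baseLabel_lt_of_row_lt h' hi

lemma baseLabel_inj (h : IsBox lam i j) (h' : IsBox lam i' j')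
    (he : baseLabel lam i j = baseLabel lam i' j') : i = i' ∧ j = j' := by
  by_contra hne
  rcases (by omega : (j < j' ∨ j = j' ∧ i' < i) ∨ (j' < j ∨ j' = j ∧ i < i')) with hlt | hlt
  · exact (baseLabel_lt_baseLabel h' hlt).ne he
  · exact (baseLabel_lt_baseLabel h hlt).ne' he

/-- The box labelled `b + 1` lies `m` boxes right of the box labelled `a + 1`, in the same row. -/
def RowStep (lam : List ℕ) (m a b : ℕ) : Prop :=
  ∃ i j, IsBox lam i (j + m) ∧ baseLabel lam i j = a + 1 ∧ baseLabel lam i (j + m) = b + 1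

variable {a b b' : ℕ}

lemma RowStep.lt_sum_left (h : RowStep lam m a b) : a < lam.sum := by
  obtain ⟨i, j, -, ha, -⟩ := h
  have := baseLabel_le_sum lam i j
  omega

lemma RowStep.lt_sum_right (h : RowStep lam m a b) : b < lam.sum := by
  obtain ⟨i, j, -, -, hb⟩ := h
  have := baseLabel_le_sum lam i (j + m)
  omega

lemma RowStep.right_unique (h : RowStep lam m a b) (h' : RowStep lam m a b') : b = b' := by
  obtain ⟨i, j, hbox, ha, hb⟩ := h
  obtain ⟨i', j', hbox', ha', hb'⟩ := h'
  obtain ⟨rfl, rfl⟩ := baseLabel_inj hbox.left hbox'.left (ha.trans ha'.symm)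
  omega

lemma not_rowStep_succ_self : ¬ RowStep lam (m + 1) a a := by
  rintro ⟨i, j, hbox, ha, ha'⟩
  have := (baseLabel_inj hbox.left hbox (ha.trans ha'.symm)).2
  omega

lemma rowStep_succ_iff : RowStep lam (m + 1) a b ↔ ∃ c, RowStep lam m a c ∧ RowStep lam 1 c b := by
  constructor
  · rintro ⟨i, j, hbox, ha, hb⟩
    have hbox' : IsBox lam i (j + m) := (show IsBox lam i (j + m + 1) from hbox).left
    have hpos := colStart_lt_baseLabel hbox'
    exact ⟨baseLabel lam i (j + m) - 1, ⟨i, j, hbox', ha, by omega⟩,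
      ⟨i, j + m, hbox, by omega, hb⟩⟩
  · rintro ⟨c, ⟨i, j, hbox, ha, hc⟩, ⟨i', j', hbox', hc', hb⟩⟩
    obtain ⟨rfl, rfl⟩ := baseLabel_inj hbox hbox'.left (hc.trans hc'.symm)
    exact ⟨i, j, hbox', ha, hb⟩

end BaseFilling

section Shift

variable {n : ℕ} {lam : List ℕ}

lemma Finset.sum_boole_mul_boole {ι R : Type*} [Fintype ι] [Semiring R] (p q : ι → Prop)
    (hp : ∀ c c', p c → p c' → c = c') :
    ∑ c, (if p c then (1 : R) else 0) * (if q c then 1 else 0) =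
      if ∃ c, p c ∧ q c then 1 else 0 := by
  by_cases h : ∃ c, p c ∧ q c
  · obtain ⟨c, hpc, hqc⟩ := h
    rw [if_pos ⟨c, hpc, hqc⟩, Finset.sum_eq_single c]
    · simp [hpc, hqc]
    · intro c' _ hc'
      rw [if_neg fun hpc' => hc' (hp c' c hpc' hpc), zero_mul]
    · simp
  · rw [if_neg h]
    refine Finset.sum_eq_zero fun c _ => ?_
    by_cases hpc : p c
    · rw [if_neg fun hqc => h ⟨c, hpc, hqc⟩, mul_zero]
    · rw [if_neg hpc, zero_mul]

lemma Xlam_apply (a b : Fin n) : Xlam n lam a b = if RowStep lam 1 a b then 1 else 0 :=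
  rfl

lemma Xlam_pow_succ_apply (hn : lam.sum = n) (m : ℕ) (a b : Fin n) :
    (Xlam n lam ^ (m + 1)) a b = if RowStep lam (m + 1) a b then 1 else 0 := by
  induction m generalizing b with
  | zero => rw [zero_add, pow_one, Xlam_apply]
  | succ m ih =>
    have hstep : (∃ c : Fin n, RowStep lam (m + 1) a c ∧ RowStep lam 1 c b) ↔
        RowStep lam (m + 1 + 1) a b := by
      refine ⟨fun ⟨c, hac, hcb⟩ => rowStep_succ_iff.2 ⟨c, hac, hcb⟩, fun h => ?_⟩
      obtain ⟨c, hac, hcb⟩ := rowStep_succ_iff.1 h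
      exact ⟨⟨c, hn ▸ hac.lt_sum_right⟩, hac, hcb⟩
    simp only [pow_succ _ (m + 1), Matrix.mul_apply, ih, Xlam_apply]
    rw [Finset.sum_boole_mul_boole _ _ fun c c' hc hc' => Fin.ext (hc.right_unique hc')]
    simp only [hstep]

lemma Xlam_pow_succ_apply_self (hn : lam.sum = n) (m : ℕ) (a : Fin n) :
    (Xlam n lam ^ (m + 1)) a a = 0 := by
  rw [Xlam_pow_succ_apply hn, if_neg not_rowStep_succ_self]

lemma rowStep_of_Xlam_pow_apply_ne_zero (hn : lam.sum = n) {m : ℕ} {a b : Fin n}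
    (hb : RowStep lam 0 b b) (h : (Xlam n lam ^ m) a b ≠ 0) : RowStep lam m a b := by
  cases m with
  | zero =>
    obtain rfl : a = b := by
      by_contra hab
      exact h (by rw [pow_zero, Matrix.one_apply_ne hab])
    exact hb
  | succ m =>
    rw [Xlam_pow_succ_apply hn] at h
    by_contra hm
    exact h (if_neg hm)

lemma RowStrictT.lt_of_rowStep (hn : lam.sum = n) {w : Equiv.Perm (Fin n)}
    (hrs : RowStrictT n lam w) {d : ℕ} {p q : Fin n} (h : RowStep lam (d + 1) (w p) (w q)) :
    p < q := by
  have hone : ∀ p q : Fin n, RowStep lam 1 (w p) (w q) → p < q :=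
    fun p q ⟨i, j, hbox, hp, hq⟩ => hrs i j hbox p q hp.symm hq.symm
  induction d generalizing q with
  | zero => exact hone p q h
  | succ d ih =>
    obtain ⟨c, hpc, hcq⟩ := rowStep_succ_iff.1 h
    obtain ⟨r, hr⟩ := w.surjective ⟨c, hn ▸ hpc.lt_sum_right⟩
    have hrc : (w r : ℕ) = c := congrArg Fin.val hr
    rw [← hrc] at hpc hcq
    exact (ih hpc).trans (hone r q hcq)

end Shift

section Springer

variable {n : ℕ} {lam : List ℕ} {w : Equiv.Perm (Fin n)} {k ℓ : Fin n} {m : ℕ}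

lemma SpringerInvT.rowStep_zero_left (hinv : SpringerInvT n lam w k ℓ) :
    RowStep lam 0 (w k) (w k) := by
  obtain ⟨-, ik, jk, -, -, hbk, -, hk, -⟩ := hinv
  exact ⟨ik, jk, hbk, hk, hk⟩

lemma SpringerInvT.rowStep_zero_right (hinv : SpringerInvT n lam w k ℓ) :
    RowStep lam 0 (w ℓ) (w ℓ) := by
  obtain ⟨-, -, -, il, jl, -, hbl, -, hl, -⟩ := hinv
  exact ⟨il, jl, hbl, hl, hl⟩

lemma SpringerInvT.lt_of_rowStep (hinv : SpringerInvT n lam w k ℓ) {a b : ℕ}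
    (ha : RowStep lam m a (w k)) (hb : RowStep lam m b (w ℓ)) : a < b := by
  obtain ⟨-, ik, jk, il, jl, hbk, hbl, hk, hl, hlex, -⟩ := hinv
  obtain ⟨i₁, j₁, hbox₁, ha₁, hk₁⟩ := ha
  obtain ⟨i₂, j₂, hbox₂, hb₂, hl₂⟩ := hb
  obtain ⟨rfl, rfl⟩ := baseLabel_inj hbox₁ hbk (hk₁.trans hk.symm)
  obtain ⟨rfl, rfl⟩ := baseLabel_inj hbox₂ hbl (hl₂.trans hl.symm)
  have := baseLabel_lt_baseLabel (i := i₁) (j := j₁) hbox₂.left (by omega)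
  omega

lemma SpringerInvT.not_rowStep_of_rowStep (hn : lam.sum = n) (hrs : RowStrictT n lam w)
    (hinv : SpringerInvT n lam w k ℓ) {m' c : ℕ} (hℓ : RowStep lam m c (w ℓ)) :
    ¬ RowStep lam m' c (w k) := by
  rintro ⟨i₂, j₂, hbox₂, hc₂, hk₂⟩
  obtain ⟨hlk, ik, jk, il, jl, hbk, hbl, hk, hl, hlex, -⟩ := hinv
  obtain ⟨i₁, j₁, hbox₁, hc₁, hl₁⟩ := hℓ
  obtain ⟨rfl, rfl⟩ := baseLabel_inj hbox₁.left hbox₂.left (hc₁.trans hc₂.symm)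
  obtain ⟨rfl, rfl⟩ := baseLabel_inj hbox₁ hbl (hl₁.trans hl.symm)
  obtain ⟨rfl, rfl⟩ := baseLabel_inj hbox₂ hbk (hk₂.trans hk.symm)
  rcases hlex with hlt | ⟨-, hlt⟩
  · have hcol : j₁ + m' + (m - m' - 1 + 1) = j₁ + m := by omega
    have hkℓ : RowStep lam (m - m' - 1 + 1) (w k) (w ℓ) :=
      ⟨i₁, j₁ + m', by rwa [hcol], hk, by rwa [hcol]⟩
    exact (hrs.lt_of_rowStep hn hkℓ).not_gt hlk
  · exact lt_irrefl _ hlt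

def springerBlock (n : ℕ) (lam : List ℕ) (w : Equiv.Perm (Fin n)) (k ℓ : Fin n) :
    Matrix (Fin n) (Fin n) ℂ :=
  if SpringerInvT n lam w k ℓ then
    ∑ m ∈ Finset.range n,
      (Xlam n lam) ^ m * Matrix.single (w k) (w ℓ) (1 : ℂ) * ((Xlam n lam)ᵀ) ^ m
  else 0

lemma BkMat_eq_one_add_sum (x : Fin n → ℂ) :
    BkMat n lam w k x = 1 + ∑ ℓ, x ℓ • springerBlock n lam w k ℓ := by
  simp only [BkMat, springerBlock, smul_ite, smul_zero]

lemma Matrix.mul_single_one_mul_apply {ι R : Type*} [Fintype ι] [DecidableEq ι] [Semiring R]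
    (A B : Matrix ι ι R) (u v a b : ι) :
    (A * Matrix.single u v (1 : R) * B) a b = A a u * B v b := by
  rw [Matrix.mul_apply, Finset.sum_eq_single v]
  · rw [Matrix.mul_single_apply_same, mul_one]
  · intro c _ hc
    rw [Matrix.mul_single_apply_of_ne _ _ _ _ _ hc, zero_mul]
  · simp

lemma springerBlock_apply (hinv : SpringerInvT n lam w k ℓ) (a b : Fin n) :
    springerBlock n lam w k ℓ a b =
      ∑ m ∈ Finset.range n, (Xlam n lam ^ m) a (w k) * (Xlam n lam ^ m) b (w ℓ) := by
  rw [springerBlock, if_pos hinv, Matrix.sum_apply]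
  refine Finset.sum_congr rfl fun m _ => ?_
  rw [Matrix.mul_single_one_mul_apply, ← Matrix.transpose_pow, Matrix.transpose_apply]

lemma exists_rowStep_of_springerBlock_apply_ne_zero (hn : lam.sum = n) {a b : Fin n}
    (h : springerBlock n lam w k ℓ a b ≠ 0) :
    SpringerInvT n lam w k ℓ ∧ ∃ m, RowStep lam m a (w k) ∧ RowStep lam m b (w ℓ) := by
  by_cases hinv : SpringerInvT n lam w k ℓ
  · rw [springerBlock_apply hinv] at h
    obtain ⟨m, -, hm⟩ := Finset.exists_ne_zero_of_sum_ne_zero h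
    obtain ⟨ha, hb⟩ := mul_ne_zero_iff.1 hm
    exact ⟨hinv, m, rowStep_of_Xlam_pow_apply_ne_zero hn hinv.rowStep_zero_left ha,
      rowStep_of_Xlam_pow_apply_ne_zero hn hinv.rowStep_zero_right hb⟩
  · exact absurd (by rw [springerBlock, if_neg hinv]; rfl) h

lemma springerBlock_apply_eq_zero_of_not_lt (hn : lam.sum = n) {a b : Fin n} (hab : ¬ a < b) :
    springerBlock n lam w k ℓ a b = 0 := by
  by_contra h
  obtain ⟨hinv, m, ha, hb⟩ := exists_rowStep_of_springerBlock_apply_ne_zero hn h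
  exact hab (hinv.lt_of_rowStep ha hb)

lemma springerBlock_mul_springerBlock (hn : lam.sum = n) (hrs : RowStrictT n lam w)
    (ℓ ℓ' : Fin n) : springerBlock n lam w k ℓ * springerBlock n lam w k ℓ' = 0 := by
  ext a b
  rw [Matrix.mul_apply, Matrix.zero_apply]
  refine Finset.sum_eq_zero fun c _ => ?_
  by_contra hne
  obtain ⟨h, h'⟩ := mul_ne_zero_iff.1 hne
  obtain ⟨hinv, m, -, hcℓ⟩ := exists_rowStep_of_springerBlock_apply_ne_zero hn h
  obtain ⟨-, m', hck, -⟩ := exists_rowStep_of_springerBlock_apply_ne_zero hn h'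
  exact hinv.not_rowStep_of_rowStep hn hrs hcℓ hck

lemma springerBlock_apply_inversion (hn : lam.sum = n) (hinv : SpringerInvT n lam w k ℓ)
    (ℓ' : Fin n) : springerBlock n lam w k ℓ' (w k) (w ℓ) = if ℓ' = ℓ then 1 else 0 := by
  by_cases hinv' : SpringerInvT n lam w k ℓ'
  · rw [springerBlock_apply hinv', Finset.sum_eq_single_of_mem 0 (Finset.mem_range.2 k.pos)]
    · simp [Matrix.one_apply, w.injective.eq_iff, eq_comm]
    · intro m _ hm
      obtain ⟨m, rfl⟩ := Nat.exists_eq_succ_of_ne_zero hm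
      rw [Xlam_pow_succ_apply_self hn, zero_mul]
  · rw [springerBlock, if_neg hinv', if_neg (by rintro rfl; exact hinv' hinv), Matrix.zero_apply]

end Springer

section UnipotentCombination

lemma one_add_sum_smul_mul_one_add_sum_smul {ι R A : Type*} [Fintype ι] [CommSemiring R]
    [Semiring A] [Algebra R A] {N : ι → A} (hN : ∀ i j, N i * N j = 0) (x y : ι → R) :
    (1 + ∑ i, x i • N i) * (1 + ∑ i, y i • N i) = 1 + ∑ i, (x + y) i • N i := by
  have hsq : (∑ i, x i • N i) * (∑ i, y i • N i) = 0 := by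
    rw [Finset.sum_mul_sum]
    exact Finset.sum_eq_zero fun i _ => Finset.sum_eq_zero fun j _ => by
      rw [smul_mul_smul_comm, hN, smul_zero]
  simp only [Pi.add_apply, add_smul, Finset.sum_add_distrib, add_mul, mul_add, one_mul,
    mul_one, hsq, add_zero]
  abel

variable {n : ℕ} {ι : Type*} [Fintype ι] {N : ι → Matrix (Fin n) (Fin n) ℂ}

lemma isUpperUnip_one_add_sum_smul (hN : ∀ i a b, ¬ a < b → N i a b = 0) (x : ι → ℂ) :
    IsUpperUnip n (1 + ∑ i, x i • N i) := by
  have hsum : ∀ a b, ¬ a < b → (∑ i, x i • N i) a b = 0 := fun a b hab => by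
    simp [Matrix.sum_apply, hN _ a b hab]
  refine ⟨fun a => ?_, fun a b hba => ?_⟩
  · rw [Matrix.add_apply, hsum a a (lt_irrefl a), Matrix.one_apply_eq, add_zero]
  · rw [Matrix.add_apply, hsum a b (not_lt.2 hba.le), Matrix.one_apply_ne hba.ne', add_zero]

lemma one_add_sum_smul_apply_of_ne [DecidableEq ι] {a b : Fin n} (hab : a ≠ b) (x : ι → ℂ) (j : ι)
    (hN : ∀ i, N i a b = if i = j then 1 else 0) : (1 + ∑ i, x i • N i) a b = x j := by
  simp [Matrix.one_apply_ne hab, Matrix.sum_apply, hN]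

end UnipotentCombination

theorem stmt10_general (n : ℕ) (lam : List ℕ) (hn : lam.sum = n)
    (w : Equiv.Perm (Fin n)) (hrs : RowStrictT n lam w)
    (k : Fin n) :
    (∀ x : Fin n → ℂ, (∀ ℓ, ¬ SpringerInvT n lam w k ℓ → x ℓ = 0) →
      IsUpperUnip n (BkMat n lam w k x)) ∧
    (∀ x y : Fin n → ℂ,
      (∀ ℓ, ¬ SpringerInvT n lam w k ℓ → x ℓ = 0) →
      (∀ ℓ, ¬ SpringerInvT n lam w k ℓ → y ℓ = 0) →
      BkMat n lam w k x * BkMat n lam w k y = BkMat n lam w k (x + y)) ∧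
    (∀ x y : Fin n → ℂ,
      (∀ ℓ, ¬ SpringerInvT n lam w k ℓ → x ℓ = 0) →
      (∀ ℓ, ¬ SpringerInvT n lam w k ℓ → y ℓ = 0) →
      BkMat n lam w k x = BkMat n lam w k y → x = y) := by
  refine ⟨fun x _ => ?_, fun x y _ _ => ?_, fun x y hx hy hxy => ?_⟩
  · rw [BkMat_eq_one_add_sum]
    exact isUpperUnip_one_add_sum_smul (fun _ _ _ => springerBlock_apply_eq_zero_of_not_lt hn) x
  · simp only [BkMat_eq_one_add_sum]
    exact one_add_sum_smul_mul_one_add_sum_smul (springerBlock_mul_springerBlock hn hrs) x y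
  · have hcoord : ∀ z ℓ, SpringerInvT n lam w k ℓ → BkMat n lam w k z (w k) (w ℓ) = z ℓ :=
      fun z ℓ hinv => by
        rw [BkMat_eq_one_add_sum]
        exact one_add_sum_smul_apply_of_ne (w.injective.ne hinv.1.ne') z ℓ
          (springerBlock_apply_inversion hn hinv)
    funext ℓ
    by_cases hinv : SpringerInvT n lam w k ℓ
    · rw [← hcoord x ℓ hinv, ← hcoord y ℓ hinv, hxy]
    · rw [hx ℓ hinv, hy ℓ hinv]

/-- `B_k(w)` is an abelian subgroup of the upper unipotent group `U`, of dimension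
`|inv_λ^k(w)|`: each element is upper unipotent, the product of elements with coordinates `x`
and `y` has coordinates `x + y` (so `B_k(w)` is an abelian group), and the parametrization by
coordinates supported on `inv_λ^k(w)` is injective. -/
theorem stmt10 (n : ℕ) (lam : List ℕ) (hn : lam.sum = n)
    (w : Equiv.Perm (Fin n)) (hrs : RowStrictT n lam w)
    (k : Fin n) (hk : 1 ≤ (k : ℕ)) :
    (∀ x : Fin n → ℂ, (∀ ℓ, ¬ SpringerInvT n lam w k ℓ → x ℓ = 0) →
      IsUpperUnip n (BkMat n lam w k x)) ∧
    (∀ x y : Fin n → ℂ,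
      (∀ ℓ, ¬ SpringerInvT n lam w k ℓ → x ℓ = 0) →
      (∀ ℓ, ¬ SpringerInvT n lam w k ℓ → y ℓ = 0) →
      BkMat n lam w k x * BkMat n lam w k y = BkMat n lam w k (x + y)) ∧
    (∀ x y : Fin n → ℂ,
      (∀ ℓ, ¬ SpringerInvT n lam w k ℓ → x ℓ = 0) →
      (∀ ℓ, ¬ SpringerInvT n lam w k ℓ → y ℓ = 0) →
      BkMat n lam w k x = BkMat n lam w k y → x = y) :=
  stmt10_general n lam hn w hrs k
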